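/- arXiv:2504.10844 — 4 statements merged into one kernel-verified Lean document; each statement's English description precedes it below -/
import Mathlib

section
/- Comparison principle: Let G be a finite weighted graph, T > 0, a ≥ 0 on V, p > 1, and let u, v: V × [0,T] → ℝ be C¹ in time with ∂_t u - Δu + au - |u|^{p-1}u ≥ ∂_t v - Δv + av - |v|^{p-1}v on V × [0,T] and u(x,0) ≥ v(x,0) for all x ∈ V. Then u(x,t) ≥ v(x,t) for all (x,t) ∈ V × [0,T]. -/
/-!
Put `w = v - u` and `z(t) = ∫_V w₊² dμ`. Multiplying the inequality satisfied by `w` by `2w₊` and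
integrating, the Laplacian contributes `-2∫∇w₊∇w dμ ≤ 0`, the potential contributes
`-2∫a w₊² dμ ≤ 0`, and the nonlinearity `s ↦ |s|^{p-1}s`, whose derivative `p|s|^{p-1}` is bounded
on the compact range of `u` and `v`, contributes at most `2K z` for a Lipschitz constant `K`.
So `z' ≤ 2Kz`, `z(0) = 0`, `z ≥ 0`, and Grönwall's inequality forces `z ≡ 0`.
-/

open Finset Real

noncomputable section

/-- A finite weighted graph: positive vertex measure `mu`, symmetric nonnegative
edge weights `w` (an edge `x ∼ y` is present iff `0 < w x y`). -/
structure WGraph (V : Type*) [Fintype V] where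
  mu : V → ℝ
  w : V → V → ℝ
  mu_pos : ∀ x, 0 < mu x
  w_symm : ∀ x y, w x y = w y x
  w_nonneg : ∀ x y, 0 ≤ w x y

variable {V : Type*} [Fintype V]

/-- Integration on the graph: `∫_V f dμ = Σ_x μ(x) f(x)`. -/
def WGraph.integral (G : WGraph V) (f : V → ℝ) : ℝ := ∑ x, G.mu x * f x

/-- The μ-Laplacian: `Δu(x) = (1/μ(x)) Σ_y ω_{xy}(u(y)-u(x))`. -/
def WGraph.lap (G : WGraph V) (u : V → ℝ) (x : V) : ℝ :=
  (∑ y, G.w x y * (u y - u x)) / G.mu x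

/-- Discrete Dirichlet pairing `∫_V ∇u∇v dμ = (1/2)Σ_xΣ_y ω_{xy}(u(y)-u(x))(v(y)-v(x))`. -/
def WGraph.dirichlet (G : WGraph V) (u v : V → ℝ) : ℝ :=
  (1 / 2) * ∑ x, ∑ y, G.w x y * (u y - u x) * (v y - v x)

/-- Connectedness: any two vertices are joined by a finite chain of edges. -/
def WGraph.Connected (G : WGraph V) : Prop :=
  ∀ x y : V, Relation.ReflTransGen (fun a b => 0 < G.w a b) x y

/-- `‖u‖²_{1,a} = ∫_V (|∇u|² + a u²) dμ`. -/
def WGraph.norm1aSq (G : WGraph V) (a : V → ℝ) (u : V → ℝ) : ℝ :=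
  G.dirichlet u u + G.integral (fun x => a x * u x ^ 2)

/-- The first eigenvalue `λ_a` of `-Δ + a`, as the infimum of the Rayleigh quotient. -/
noncomputable def rayleighInf (G : WGraph V) (a : V → ℝ) : ℝ :=
  sInf {r : ℝ | ∃ u : V → ℝ, u ≠ 0 ∧
    r = G.norm1aSq a u / G.integral (fun x => u x ^ 2)}

/-- The energy functional `J(u) = (1/2)∫(|∇u|²+au²)dμ - (1/(p+1))∫|u|^{p+1}dμ`. -/
noncomputable def WGraph.J (G : WGraph V) (a : V → ℝ) (p : ℝ) (u : V → ℝ) : ℝ :=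
  (1/2) * G.norm1aSq a u - (1/(p+1)) * G.integral (fun x => |u x| ^ (p+1))

/-- The Nehari functional `N(u) = ∫(|∇u|²+au²)dμ - ∫|u|^{p+1}dμ`. -/
noncomputable def WGraph.nehari (G : WGraph V) (a : V → ℝ) (p : ℝ) (u : V → ℝ) : ℝ :=
  G.norm1aSq a u - G.integral (fun x => |u x| ^ (p+1))

/-- The Sobolev-type constant `Λ`. -/
noncomputable def sobolevInf (G : WGraph V) (a : V → ℝ) (p : ℝ) : ℝ :=
  sInf {r : ℝ | ∃ u : V → ℝ, u ≠ 0 ∧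
    r = G.norm1aSq a u / (G.integral (fun x => |u x| ^ (p+1))) ^ (2/(p+1))}

/-- The depth `r` of the potential well. -/
noncomputable def wellDepth (G : WGraph V) (a : V → ℝ) (p : ℝ) : ℝ :=
  sInf {r : ℝ | ∃ u : V → ℝ, u ≠ 0 ∧ G.nehari a p u = 0 ∧ r = G.J a p u}

open Filter Topology

theorem hasDerivAt_posPart_sq (c : ℝ) : HasDerivAt (fun s : ℝ => s⁺ ^ 2) (2 * c⁺) c := by
  rw [hasDerivAt_iff_isLittleO]
  refine Asymptotics.IsBigO.trans_isLittleO ?_ (Asymptotics.isLittleO_pow_sub_sub c one_lt_two)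
  -- the remainder `s⁺ ^ 2 - c⁺ ^ 2 - 2 c⁺ (s - c)` is bounded by `(s - c) ^ 2`
  refine Asymptotics.IsBigO.of_bound 1 (Eventually.of_forall fun s => ?_)
  simp only [Real.norm_eq_abs, one_mul, smul_eq_mul, sq_abs]
  rw [abs_of_nonneg (sq_nonneg (s - c)), abs_le]
  rcases le_total s 0 with hs | hs <;> rcases le_total c 0 with hc | hc <;>
    simp only [posPart_eq_zero.2, posPart_eq_self.2, hs, hc] <;> constructor <;> nlinarith

theorem hasDerivAt_abs_rpow_mul_self {q : ℝ} (hq : 0 < q) (c : ℝ) :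
    HasDerivAt (fun s : ℝ => |s| ^ q * s) ((q + 1) * |c| ^ q) c := by
  rcases eq_or_ne c 0 with rfl | hc
  · have hpow : Tendsto (fun s : ℝ => |s| ^ q) (𝓝 0) (𝓝 0) := by
      simpa [Real.zero_rpow hq.ne'] using
        (continuous_abs.rpow_const fun _ => Or.inr hq.le).tendsto (0 : ℝ)
    rw [hasDerivAt_iff_isLittleO]
    simpa [Real.zero_rpow hq.ne'] using
      (Asymptotics.isLittleO_one_iff ℝ).2 hpow |>.mul_isBigO (Asymptotics.isBigO_refl id _)
  · have hc' : |c| ≠ 0 := abs_ne_zero.2 hc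
    refine (((hasDerivAt_abs hc).rpow_const (Or.inl hc')).fun_mul (hasDerivAt_id' c)).congr_deriv ?_
    calc (SignType.sign c : ℝ) * q * |c| ^ (q - 1) * c + |c| ^ q * 1
        = q * (|c| ^ (q - 1) * (SignType.sign c * c)) + |c| ^ q := by ring
      _ = (q + 1) * |c| ^ q := by
        rw [sign_mul_self, Real.rpow_sub_one hc', div_mul_cancel₀ _ hc']
        ring

theorem abs_rpow_mul_self_sub_le {q M a b : ℝ} (hq : 0 < q) (ha : |a| ≤ M) (hb : |b| ≤ M)
    (hab : a ≤ b) : |b| ^ q * b - |a| ^ q * a ≤ (q + 1) * M ^ q * (b - a) := by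
  have hderiv := hasDerivAt_abs_rpow_mul_self hq
  refine (convex_Icc (-M) M).image_sub_le_mul_sub_of_deriv_le
    (fun s _ => (hderiv s).continuousAt.continuousWithinAt)
    (fun s _ => (hderiv s).differentiableAt.differentiableWithinAt) (fun s hs => ?_)
    a (abs_le.1 ha) b (abs_le.1 hb) hab
  rw [interior_Icc] at hs
  rw [(hderiv s).deriv]
  exact mul_le_mul_of_nonneg_left
    (Real.rpow_le_rpow (abs_nonneg s) (abs_le.2 ⟨hs.1.le, hs.2.le⟩) hq.le) (by linarith)

theorem posPart_sub_mul_abs_rpow_mul_self_sub_le {q M a b : ℝ} (hq : 0 < q) (ha : |a| ≤ M)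
    (hb : |b| ≤ M) : (b - a)⁺ * (|b| ^ q * b - |a| ^ q * a) ≤ (q + 1) * M ^ q * (b - a)⁺ ^ 2 := by
  rcases le_total b a with hba | hab
  · simp [posPart_eq_zero.2 (sub_nonpos.2 hba)]
  · rw [posPart_eq_self.2 (sub_nonneg.2 hab), sq, ← mul_assoc, mul_comm _ (b - a)]
    exact mul_le_mul_of_nonneg_left (abs_rpow_mul_self_sub_le hq ha hb hab) (sub_nonneg.2 hab)

theorem nonpos_of_hasDerivWithinAt_le_mul {f f' : ℝ → ℝ} {K a b : ℝ}
    (hf : ∀ t ∈ Set.Icc a b, HasDerivWithinAt f (f' t) (Set.Icc a b) t) (ha : f a ≤ 0)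
    (bound : ∀ t ∈ Set.Ico a b, f' t ≤ K * f t) : ∀ t ∈ Set.Icc a b, f t ≤ 0 := by
  intro t ht
  simpa [gronwallBound_ε0_δ0] using le_gronwallBound_of_liminf_deriv_right_le (ε := 0)
    (fun t ht => (hf t ht).continuousWithinAt)
    (fun t ht _ hr => ((hf t (Set.Ico_subset_Icc_self ht)).mono_of_mem_nhdsWithin
      (Icc_mem_nhdsGE_of_mem ht)).liminf_right_slope_le hr)
    ha (by simpa using bound) t ht

theorem exists_forall_abs_le_of_continuousOn {ι : Type*} [Fintype ι] {f : ι → ℝ → ℝ}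
    {s : Set ℝ} (hs : IsCompact s) (hf : ∀ i, ContinuousOn (f i) s) :
    ∃ M, ∀ i, ∀ t ∈ s, |f i t| ≤ M := by
  obtain ⟨M, hM⟩ := hs.exists_bound_of_continuousOn (f := fun t i => f i t) (continuousOn_pi.2 hf)
  exact ⟨M, fun i t ht => (norm_le_pi_norm (fun i => f i t) i).trans (hM t ht)⟩

namespace WGraph

variable (G : WGraph V)

theorem integral_mono {f g : V → ℝ} (h : ∀ x, f x ≤ g x) : G.integral f ≤ G.integral g :=
  Finset.sum_le_sum fun x _ => mul_le_mul_of_nonneg_left (h x) (G.mu_pos x).le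

theorem integral_add (f g : V → ℝ) :
    G.integral (fun x => f x + g x) = G.integral f + G.integral g := by
  simp only [integral, mul_add, Finset.sum_add_distrib]

theorem integral_const_mul (c : ℝ) (f : V → ℝ) :
    G.integral (fun x => c * f x) = c * G.integral f := by
  simp only [integral, Finset.mul_sum, mul_left_comm]

theorem eq_zero_of_integral_sq_nonpos {f : V → ℝ} (h : G.integral (fun x => f x ^ 2) ≤ 0)
    (x : V) : f x = 0 := by
  have hnonneg : ∀ y ∈ Finset.univ, 0 ≤ G.mu y * f y ^ 2 :=
    fun y _ => mul_nonneg (G.mu_pos y).le (sq_nonneg _)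
  have hx := (Finset.sum_eq_zero_iff_of_nonneg hnonneg).1
    (le_antisymm h (Finset.sum_nonneg hnonneg)) x (Finset.mem_univ x)
  simpa [(G.mu_pos x).ne'] using hx

theorem hasDerivWithinAt_integral {f : V → ℝ → ℝ} {f' : V → ℝ} {s : Set ℝ} {t : ℝ}
    (h : ∀ x, HasDerivWithinAt (f x) (f' x) s t) :
    HasDerivWithinAt (fun t => G.integral (fun x => f x t)) (G.integral f') s t :=
  HasDerivWithinAt.fun_sum fun x _ => (h x).const_mul (G.mu x)

theorem lap_sub (f g : V → ℝ) (x : V) :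
    G.lap (fun y => f y - g y) x = G.lap f x - G.lap g x := by
  simp only [lap, ← sub_div, ← Finset.sum_sub_distrib]
  congr 1
  exact Finset.sum_congr rfl fun y _ => by ring

theorem integral_mul_lap (f g : V → ℝ) :
    G.integral (fun x => f x * G.lap g x) = -G.dirichlet f g := by
  have hexpand : G.integral (fun x => f x * G.lap g x) =
      ∑ x, ∑ y, G.w x y * f x * (g y - g x) := by
    refine Finset.sum_congr rfl fun x _ => ?_
    dsimp only
    rw [lap, mul_left_comm, mul_div_cancel₀ _ (G.mu_pos x).ne', Finset.mul_sum]
    exact Finset.sum_congr rfl fun y _ => by ring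
  have hswap : ∑ x, ∑ y, G.w x y * f x * (g y - g x) =
      ∑ x, ∑ y, G.w x y * f y * (g x - g y) := by
    rw [Finset.sum_comm]
    exact Finset.sum_congr rfl fun x _ => Finset.sum_congr rfl fun y _ => by rw [G.w_symm]
  have hpolar : ∑ x, ∑ y, G.w x y * (f y - f x) * (g y - g x) =
      -(∑ x, ∑ y, G.w x y * f x * (g y - g x) + ∑ x, ∑ y, G.w x y * f y * (g x - g y)) := by
    simp only [← Finset.sum_add_distrib, ← Finset.sum_neg_distrib]
    exact Finset.sum_congr rfl fun x _ => Finset.sum_congr rfl fun y _ => by ring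
  rw [hexpand, dirichlet, hpolar, ← hswap]
  ring

theorem dirichlet_comp_nonneg {φ : ℝ → ℝ} (hφ : Monotone φ) (f : V → ℝ) :
    0 ≤ G.dirichlet (fun x => φ (f x)) f := by
  refine mul_nonneg (by norm_num) (Finset.sum_nonneg fun x _ => Finset.sum_nonneg fun y _ => ?_)
  rw [mul_assoc]
  refine mul_nonneg (G.w_nonneg x y) ?_
  rcases le_total (f x) (f y) with h | h
  · exact mul_nonneg (sub_nonneg.2 (hφ h)) (sub_nonneg.2 h)
  · exact mul_nonneg_of_nonpos_of_nonpos (sub_nonpos.2 (hφ h)) (sub_nonpos.2 h)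

theorem integral_posPart_mul_lap_nonpos (f : V → ℝ) :
    G.integral (fun x => (f x)⁺ * G.lap f x) ≤ 0 := by
  rw [integral_mul_lap, neg_nonpos]
  exact G.dirichlet_comp_nonneg posPart_mono f

theorem integral_posPart_mul_le_of_subsolution {a : V → ℝ} (ha : ∀ x, 0 ≤ a x) {K : ℝ}
    {w w' N : V → ℝ} (hw' : ∀ x, w' x ≤ G.lap w x - a x * w x + N x)
    (hN : ∀ x, (w x)⁺ * N x ≤ K * (w x)⁺ ^ 2) :
    G.integral (fun x => 2 * (w x)⁺ * w' x) ≤ 2 * K * G.integral (fun x => (w x)⁺ ^ 2) := by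
  have hpointwise : ∀ x, 2 * (w x)⁺ * w' x ≤ 2 * ((w x)⁺ * G.lap w x) + 2 * K * (w x)⁺ ^ 2 := by
    intro x
    have hpos : 0 ≤ (w x)⁺ := posPart_nonneg _
    have hsq : (w x)⁺ * w x = (w x)⁺ ^ 2 := by
      rcases le_total (w x) 0 with h | h
      · simp [posPart_eq_zero.2 h]
      · rw [posPart_eq_self.2 h, sq]
    nlinarith [mul_le_mul_of_nonneg_left (hw' x) hpos, hN x, ha x, sq_nonneg (w x)⁺]
  calc G.integral (fun x => 2 * (w x)⁺ * w' x)
      ≤ G.integral (fun x => 2 * ((w x)⁺ * G.lap w x) + 2 * K * (w x)⁺ ^ 2) :=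
        G.integral_mono hpointwise
    _ = 2 * G.integral (fun x => (w x)⁺ * G.lap w x)
          + 2 * K * G.integral (fun x => (w x)⁺ ^ 2) := by
        rw [integral_add, integral_const_mul, integral_const_mul]
    _ ≤ 2 * K * G.integral (fun x => (w x)⁺ ^ 2) := by
        linarith [G.integral_posPart_mul_lap_nonpos w]

end WGraph

theorem comparison_principle_general {V : Type*} [Fintype V]
    (G : WGraph V) (T : ℝ)
    (a : V → ℝ) (ha : ∀ x, 0 ≤ a x) (p : ℝ) (hp : 1 < p)
    (u v u' v' : V → ℝ → ℝ)
    (hu : ∀ x, ∀ t ∈ Set.Icc (0:ℝ) T, HasDerivWithinAt (u x) (u' x t) (Set.Icc 0 T) t)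
    (hv : ∀ x, ∀ t ∈ Set.Icc (0:ℝ) T, HasDerivWithinAt (v x) (v' x t) (Set.Icc 0 T) t)
    (hineq : ∀ x, ∀ t ∈ Set.Icc (0:ℝ) T,
      v' x t - G.lap (fun y => v y t) x + a x * v x t - |v x t| ^ (p - 1) * v x t ≤
      u' x t - G.lap (fun y => u y t) x + a x * u x t - |u x t| ^ (p - 1) * u x t)
    (h0 : ∀ x, v x 0 ≤ u x 0) :
    ∀ x, ∀ t ∈ Set.Icc (0:ℝ) T, v x t ≤ u x t := by
  obtain ⟨Mu, hMu⟩ := exists_forall_abs_le_of_continuousOn isCompact_Icc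
    fun x t ht => (hu x t ht).continuousWithinAt
  obtain ⟨Mv, hMv⟩ := exists_forall_abs_le_of_continuousOn isCompact_Icc
    fun x t ht => (hv x t ht).continuousWithinAt
  set w : V → ℝ → ℝ := fun x t => v x t - u x t
  have hz : ∀ t ∈ Set.Icc 0 T, HasDerivWithinAt (fun t => G.integral fun x => (w x t)⁺ ^ 2)
      (G.integral fun x => 2 * (w x t)⁺ * (v' x t - u' x t)) (Set.Icc 0 T) t :=
    fun t ht => G.hasDerivWithinAt_integral fun x =>
      (hasDerivAt_posPart_sq (w x t)).comp_hasDerivWithinAt t ((hv x t ht).sub (hu x t ht))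
  have hz0 : G.integral (fun x => (w x 0)⁺ ^ 2) ≤ 0 := by
    simp [w, WGraph.integral, posPart_eq_zero.2 (sub_nonpos.2 (h0 _))]
  have hgrowth : ∀ t ∈ Set.Ico 0 T, G.integral (fun x => 2 * (w x t)⁺ * (v' x t - u' x t)) ≤
      2 * (p * max Mu Mv ^ (p - 1)) * G.integral fun x => (w x t)⁺ ^ 2 := by
    intro t ht
    have ht' := Set.Ico_subset_Icc_self ht
    refine G.integral_posPart_mul_le_of_subsolution ha
      (N := fun x => |v x t| ^ (p - 1) * v x t - |u x t| ^ (p - 1) * u x t)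
      (fun x => ?_) (fun x => ?_)
    · linarith [hineq x t ht', G.lap_sub (fun y => v y t) (fun y => u y t) x]
    · simpa using posPart_sub_mul_abs_rpow_mul_self_sub_le (sub_pos.2 hp)
        ((hMu x t ht').trans (le_max_left _ _)) ((hMv x t ht').trans (le_max_right _ _))
  intro x t ht
  exact sub_nonpos.1 (posPart_eq_zero.1 (G.eq_zero_of_integral_sq_nonpos
    (nonpos_of_hasDerivWithinAt_le_mul hz hz0 hgrowth t ht) x))

/-- comparison principle for `∂_t u - Δu + au - |u|^{p-1}u` on `V × [0,T]`. -/
theorem comparison_principle {V : Type*} [Fintype V]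
    (G : WGraph V) (T : ℝ) (hT : 0 < T)
    (a : V → ℝ) (ha : ∀ x, 0 ≤ a x) (p : ℝ) (hp : 1 < p)
    (u v u' v' : V → ℝ → ℝ)
    (hu : ∀ x, ∀ t ∈ Set.Icc (0:ℝ) T, HasDerivWithinAt (u x) (u' x t) (Set.Icc 0 T) t)
    (hv : ∀ x, ∀ t ∈ Set.Icc (0:ℝ) T, HasDerivWithinAt (v x) (v' x t) (Set.Icc 0 T) t)
    (hineq : ∀ x, ∀ t ∈ Set.Icc (0:ℝ) T,
      v' x t - G.lap (fun y => v y t) x + a x * v x t - |v x t| ^ (p - 1) * v x t ≤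
      u' x t - G.lap (fun y => u y t) x + a x * u x t - |u x t| ^ (p - 1) * u x t)
    (h0 : ∀ x, v x 0 ≤ u x 0) :
    ∀ x, ∀ t ∈ Set.Icc (0:ℝ) T, v x t ≤ u x t :=
  comparison_principle_general G T a ha p hp u v u' v' hu hv hineq h0
end
end

section
/- Potential well depth formula: with Λ = inf_{u≠0} ∫_V(|∇u|²+au²)dμ / (∫_V|u|^{p+1}dμ)^{2/(p+1)}, the depth r = inf{ J(u) : u ≢ 0, N(u) = 0 } satisfies r = ((p-1)/(2(p+1))) Λ^{(p+1)/(p-1)}, and r is attained by some nonzero u with N(u) = 0. -/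
open Finset Real

noncomputable section

variable {V : Type*} [Fintype V]

/-!
On the Nehari manifold `N(u) = 0` one has `∫|u|^{p+1} = ‖u‖²_{1,a}`, so `J(u)` is a fixed multiple
of `‖u‖²_{1,a}` and the Sobolev quotient of `u` equals `(‖u‖²_{1,a})^{(p-1)/(p+1)}`; hence
`J(u) = ((p-1)/(2(p+1))) Q(u)^{(p+1)/(p-1)} ≥ ((p-1)/(2(p+1))) Λ^{(p+1)/(p-1)}`. Conversely `Q` is
invariant under scaling, so `Λ` is attained by minimising `Q` over the compact unit sphere of the
finite-dimensional space `ℝ^V`. Connectedness and `a ≢ 0` make `‖u₀‖_{1,a} > 0` for the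
minimiser `u₀`, so a positive multiple of `u₀` lies on the Nehari manifold and attains the bound.
-/

namespace WGraph

variable (G : WGraph V) {a : V → ℝ} {p : ℝ} {u : V → ℝ}

lemma integral_nonneg {f : V → ℝ} (hf : ∀ x, 0 ≤ f x) : 0 ≤ G.integral f :=
  sum_nonneg fun x _ => mul_nonneg (G.mu_pos x).le (hf x)

lemma integral_pos {f : V → ℝ} (hf : ∀ x, 0 ≤ f x) (hne : f ≠ 0) : 0 < G.integral f := by
  obtain ⟨x₀, hx₀⟩ := Function.ne_iff.mp hne
  exact sum_pos' (fun x _ => mul_nonneg (G.mu_pos x).le (hf x))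
    ⟨x₀, mem_univ _, mul_pos (G.mu_pos x₀) ((hf x₀).lt_of_ne' hx₀)⟩

lemma integral_abs_rpow_pos (q : ℝ) (hu : u ≠ 0) : 0 < G.integral fun x => |u x| ^ q := by
  obtain ⟨x₀, hx₀⟩ := Function.ne_iff.mp hu
  exact G.integral_pos (fun x => rpow_nonneg (abs_nonneg _) _)
    (Function.ne_iff.mpr ⟨x₀, (rpow_pos_of_pos (abs_pos.mpr hx₀) q).ne'⟩)

lemma integral_abs_rpow_smul (q t : ℝ) (u : V → ℝ) :
    (G.integral fun x => |(t • u) x| ^ q) = |t| ^ q * G.integral fun x => |u x| ^ q := by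
  simp only [integral, mul_sum, Pi.smul_apply, smul_eq_mul, abs_mul,
    mul_rpow (abs_nonneg t) (abs_nonneg _)]
  exact sum_congr rfl fun x _ => by ring

lemma continuous_integral_abs_rpow {q : ℝ} (hq : 0 ≤ q) :
    Continuous fun u : V → ℝ => G.integral fun x => |u x| ^ q := by
  unfold integral
  exact continuous_finsetSum _ fun x _ =>
    continuous_const.mul (((continuous_apply x).abs).rpow_const fun _ => Or.inr hq)

lemma edge_energy_nonneg (u : V → ℝ) (x y : V) : 0 ≤ G.w x y * (u y - u x) * (u y - u x) := by
  rw [mul_assoc]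
  exact mul_nonneg (G.w_nonneg x y) (mul_self_nonneg _)

lemma dirichlet_self_nonneg (u : V → ℝ) : 0 ≤ G.dirichlet u u :=
  mul_nonneg (by norm_num) (sum_nonneg fun x _ => sum_nonneg fun y _ => G.edge_energy_nonneg u x y)

lemma eq_of_dirichlet_self_eq_zero (h : G.dirichlet u u = 0) {x y : V} (hxy : 0 < G.w x y) :
    u x = u y := by
  have hsum : ∑ x, ∑ y, G.w x y * (u y - u x) * (u y - u x) = 0 := by
    unfold dirichlet at h
    linarith
  rw [sum_eq_zero_iff_of_nonneg fun x _ =>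
    sum_nonneg fun y _ => G.edge_energy_nonneg u x y] at hsum
  have hedge := (sum_eq_zero_iff_of_nonneg fun y _ => G.edge_energy_nonneg u x y).mp
    (hsum x (mem_univ x)) y (mem_univ y)
  rw [mul_assoc, mul_eq_zero, mul_self_eq_zero, sub_eq_zero] at hedge
  exact (hedge.resolve_left hxy.ne').symm

lemma Connected.eq_of_dirichlet_self_eq_zero {G : WGraph V} (hconn : G.Connected)
    (h : G.dirichlet u u = 0) (x y : V) : u x = u y := by
  induction hconn x y with
  | refl => rfl
  | tail _ hw ih => exact ih.trans (G.eq_of_dirichlet_self_eq_zero h hw)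

lemma norm1aSq_nonneg (ha : ∀ x, 0 ≤ a x) (u : V → ℝ) : 0 ≤ G.norm1aSq a u :=
  add_nonneg (G.dirichlet_self_nonneg u)
    (G.integral_nonneg fun x => mul_nonneg (ha x) (sq_nonneg _))

/-- On a connected graph only constants have zero Dirichlet energy, and a nonzero constant
is seen by the potential `a ≢ 0`. -/
lemma norm1aSq_pos (hconn : G.Connected) (ha : ∀ x, 0 ≤ a x) (ha0 : a ≠ 0) (hu : u ≠ 0) :
    0 < G.norm1aSq a u := by
  have hpot : ∀ x, 0 ≤ a x * u x ^ 2 := fun x => mul_nonneg (ha x) (sq_nonneg _)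
  rcases (G.dirichlet_self_nonneg u).lt_or_eq with hD | hD
  · exact add_pos_of_pos_of_nonneg hD (G.integral_nonneg hpot)
  obtain ⟨x₀, hx₀⟩ := Function.ne_iff.mp hu
  obtain ⟨y, hy⟩ := Function.ne_iff.mp ha0
  have hconst : u y = u x₀ := hconn.eq_of_dirichlet_self_eq_zero hD.symm y x₀
  rw [norm1aSq, ← hD, zero_add]
  exact G.integral_pos hpot
    (Function.ne_iff.mpr ⟨y, mul_ne_zero hy (pow_ne_zero 2 (hconst ▸ hx₀))⟩)

lemma norm1aSq_smul (a : V → ℝ) (t : ℝ) (u : V → ℝ) :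
    G.norm1aSq a (t • u) = t ^ 2 * G.norm1aSq a u := by
  simp only [norm1aSq, dirichlet, integral, Pi.smul_apply, smul_eq_mul, mul_add, mul_sum]
  congr 1
  · exact sum_congr rfl fun x _ => sum_congr rfl fun y _ => by ring
  · exact sum_congr rfl fun x _ => by ring

lemma continuous_norm1aSq (a : V → ℝ) : Continuous fun u : V → ℝ => G.norm1aSq a u := by
  unfold norm1aSq dirichlet integral
  fun_prop

def sobolevQuotient (a : V → ℝ) (p : ℝ) (u : V → ℝ) : ℝ :=
  G.norm1aSq a u / (G.integral fun x => |u x| ^ (p + 1)) ^ (2 / (p + 1))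

lemma sobolevQuotient_nonneg (ha : ∀ x, 0 ≤ a x) (p : ℝ) (u : V → ℝ) :
    0 ≤ G.sobolevQuotient a p u :=
  div_nonneg (G.norm1aSq_nonneg ha u)
    (rpow_nonneg (G.integral_nonneg fun _ => rpow_nonneg (abs_nonneg _) _) _)

lemma sobolevQuotient_smul (a : V → ℝ) (hp : p + 1 ≠ 0) {t : ℝ} (ht : t ≠ 0) (u : V → ℝ) :
    G.sobolevQuotient a p (t • u) = G.sobolevQuotient a p u := by
  have htwo : (p + 1) * (2 / (p + 1)) = ((2 : ℕ) : ℝ) := by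
    field_simp
    norm_num
  rw [sobolevQuotient, sobolevQuotient, norm1aSq_smul, integral_abs_rpow_smul,
    mul_rpow (rpow_nonneg (abs_nonneg t) _)
      (G.integral_nonneg fun _ => rpow_nonneg (abs_nonneg _) _),
    ← rpow_mul (abs_nonneg t), htwo, rpow_natCast, sq_abs,
    mul_div_mul_left _ _ (pow_ne_zero 2 ht)]

lemma exists_isLeast_sobolevQuotient [Nonempty V] (a : V → ℝ) (hp : 0 < p + 1) :
    ∃ u₀ : V → ℝ, u₀ ≠ 0 ∧
      IsLeast {r | ∃ u : V → ℝ, u ≠ 0 ∧ r = G.sobolevQuotient a p u}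
        (G.sobolevQuotient a p u₀) := by
  have hden : Continuous fun u : V → ℝ => (G.integral fun x => |u x| ^ (p + 1)) ^ (2 / (p + 1)) :=
    (G.continuous_integral_abs_rpow hp.le).rpow_const fun _ => Or.inr (by positivity)
  have hcont : ContinuousOn (G.sobolevQuotient a p) (Metric.sphere 0 1) :=
    (G.continuous_norm1aSq a).continuousOn.div hden.continuousOn fun u hu =>
      (rpow_pos_of_pos (G.integral_abs_rpow_pos _ (ne_zero_of_mem_unit_sphere ⟨u, hu⟩)) _).ne'
  obtain ⟨u₀, hu₀, hmin⟩ := (isCompact_sphere (0 : V → ℝ) 1).exists_isMinOn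
    (NormedSpace.sphere_nonempty.mpr zero_le_one) hcont
  have hu₀ne : u₀ ≠ 0 := ne_zero_of_mem_unit_sphere ⟨u₀, hu₀⟩
  refine ⟨u₀, hu₀ne, ⟨u₀, hu₀ne, rfl⟩, ?_⟩
  rintro r ⟨u, hu, rfl⟩
  have hnorm : ‖u‖ ≠ 0 := norm_ne_zero_iff.mpr hu
  rw [← G.sobolevQuotient_smul a hp.ne' (inv_ne_zero hnorm) u]
  refine hmin ?_
  rw [mem_sphere_zero_iff_norm, norm_smul, norm_inv, norm_norm, inv_mul_cancel₀ hnorm]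

lemma J_eq_of_nehari_eq_zero (hp : p + 1 ≠ 0) (hN : G.nehari a p u = 0) :
    G.J a p u = (p - 1) / (2 * (p + 1)) * G.norm1aSq a u := by
  rw [J, ← sub_eq_zero.mp hN]
  field_simp
  ring

lemma sobolevQuotient_rpow_of_nehari_eq_zero (hp : 1 < p) (hu : u ≠ 0)
    (hN : G.nehari a p u = 0) :
    G.sobolevQuotient a p u ^ ((p + 1) / (p - 1)) = G.norm1aSq a u := by
  have hp₁ : p + 1 ≠ 0 := by linarith
  have hp₂ : p - 1 ≠ 0 := by linarith
  have hI := sub_eq_zero.mp hN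
  have hs : 0 < G.norm1aSq a u := hI ▸ G.integral_abs_rpow_pos _ hu
  have hQ : G.sobolevQuotient a p u = G.norm1aSq a u ^ ((p - 1) / (p + 1)) := by
    have hexp : (p - 1) / (p + 1) + 2 / (p + 1) = 1 := by
      field_simp
      ring
    rw [sobolevQuotient, ← hI, div_eq_iff (rpow_pos_of_pos hs _).ne', ← rpow_add hs, hexp,
      rpow_one]
  have hexp : (p - 1) / (p + 1) * ((p + 1) / (p - 1)) = 1 := by
    field_simp
  rw [hQ, ← rpow_mul hs.le, hexp, rpow_one]

/-- The fibre `t ↦ t • u` meets the Nehari manifold where `t ^ (p - 1)` is the ratio of the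
quadratic part to the `L^{p+1}` part. -/
lemma exists_pos_nehari_smul_eq_zero (hp : 1 < p) (hs : 0 < G.norm1aSq a u) (hu : u ≠ 0) :
    ∃ t : ℝ, 0 < t ∧ G.nehari a p (t • u) = 0 := by
  set I := G.integral fun x => |u x| ^ (p + 1)
  have hI : 0 < I := G.integral_abs_rpow_pos _ hu
  have hratio : 0 < G.norm1aSq a u / I := div_pos hs hI
  set t := (G.norm1aSq a u / I) ^ (1 / (p - 1)) with ht_def
  have ht : 0 < t := rpow_pos_of_pos hratio _
  have htpm : t ^ (p - 1) = G.norm1aSq a u / I := by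
    rw [ht_def, ← rpow_mul hratio.le, one_div_mul_cancel (by linarith), rpow_one]
  have htp : t ^ (p + 1) = G.norm1aSq a u / I * t ^ 2 := by
    rw [show p + 1 = p - 1 + ((2 : ℕ) : ℝ) by push_cast; ring, rpow_add ht, rpow_natCast, htpm]
  refine ⟨t, ht, ?_⟩
  rw [nehari, norm1aSq_smul, integral_abs_rpow_smul, abs_of_pos ht, htp]
  field_simp
  ring

lemma isLeast_nehari_energy [Nonempty V] (hconn : G.Connected) (hp : 1 < p)
    (ha : ∀ x, 0 ≤ a x) (ha0 : a ≠ 0) :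
    IsLeast {r | ∃ u : V → ℝ, u ≠ 0 ∧ G.nehari a p u = 0 ∧ r = G.J a p u}
      ((p - 1) / (2 * (p + 1)) * sobolevInf G a p ^ ((p + 1) / (p - 1))) := by
  have hp₁ : p + 1 ≠ 0 := by linarith
  obtain ⟨u₀, hu₀, hleast⟩ := G.exists_isLeast_sobolevQuotient a (by linarith : 0 < p + 1)
  have hΛ : sobolevInf G a p = G.sobolevQuotient a p u₀ := hleast.csInf_eq
  have hJ : ∀ u, u ≠ 0 → G.nehari a p u = 0 →
      G.J a p u = (p - 1) / (2 * (p + 1)) * G.sobolevQuotient a p u ^ ((p + 1) / (p - 1)) :=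
    fun u hu hN => by
      rw [G.J_eq_of_nehari_eq_zero hp₁ hN, G.sobolevQuotient_rpow_of_nehari_eq_zero hp hu hN]
  obtain ⟨t, ht, hN₀⟩ :=
    G.exists_pos_nehari_smul_eq_zero hp (G.norm1aSq_pos hconn ha ha0 hu₀) hu₀
  have htu₀ : t • u₀ ≠ 0 := smul_ne_zero ht.ne' hu₀
  refine ⟨⟨t • u₀, htu₀, hN₀, by rw [hJ _ htu₀ hN₀, G.sobolevQuotient_smul a hp₁ ht.ne', hΛ]⟩, ?_⟩
  rintro r ⟨u, hu, hN, rfl⟩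
  rw [hJ u hu hN, hΛ]
  have hexp : 0 ≤ (p + 1) / (p - 1) := div_nonneg (by linarith) (by linarith)
  have hcoef : 0 ≤ (p - 1) / (2 * (p + 1)) := div_nonneg (by linarith) (by linarith)
  exact mul_le_mul_of_nonneg_left
    (rpow_le_rpow (G.sobolevQuotient_nonneg ha p u₀) (hleast.2 ⟨u, hu, rfl⟩) hexp) hcoef

end WGraph

theorem well_depth_formula_general {V : Type*} [Fintype V]
    (G : WGraph V) (hconn : G.Connected) (p : ℝ) (hp : 1 < p)
    (a : V → ℝ) (ha : ∀ x, 0 ≤ a x) (ha0 : a ≠ 0) :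
    wellDepth G a p =
      ((p - 1) / (2 * (p + 1))) * sobolevInf G a p ^ ((p + 1) / (p - 1)) ∧
    ∃ u : V → ℝ, u ≠ 0 ∧ G.nehari a p u = 0 ∧ G.J a p u = wellDepth G a p := by
  obtain ⟨x₀, -⟩ := Function.ne_iff.mp ha0
  have : Nonempty V := ⟨x₀⟩
  have hleast := G.isLeast_nehari_energy hconn hp ha ha0
  have hdepth : wellDepth G a p = _ := hleast.csInf_eq
  obtain ⟨u, hu, hN, hJ⟩ := hleast.1
  exact ⟨hdepth, u, hu, hN, by rw [hdepth, hJ]⟩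

/-- potential well depth formula
`r = ((p-1)/(2(p+1))) Λ^{(p+1)/(p-1)}`, and `r` is attained on the Nehari manifold. -/
theorem well_depth_formula {V : Type*} [Fintype V] [Nonempty V]
    (G : WGraph V) (hconn : G.Connected) (p : ℝ) (hp : 1 < p)
    (a : V → ℝ) (ha : ∀ x, 0 ≤ a x) (ha0 : a ≠ 0) :
    wellDepth G a p =
      ((p - 1) / (2 * (p + 1))) * sobolevInf G a p ^ ((p + 1) / (p - 1)) ∧
    ∃ u : V → ℝ, u ≠ 0 ∧ G.nehari a p u = 0 ∧ G.J a p u = wellDepth G a p :=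
  well_depth_formula_general G hconn p hp a ha ha0
end
end

section
/- Perturbed well-depth bound: for any ε > 0, r_ε := inf{ J(u) : N(u) = -ε } ≥ r - ε/(p+1), where r = ((p-1)/(2(p+1)))Λ^{(p+1)/(p-1)} is the potential well depth. -/
open Finset Real

noncomputable section

variable {V : Type*} [Fintype V]

lemma WGraph.dirichlet_self_nonneg' (G : WGraph V) (u : V → ℝ) : 0 ≤ G.dirichlet u u := by
  unfold WGraph.dirichlet
  apply mul_nonneg (by norm_num)
  apply Finset.sum_nonneg; intro x _
  apply Finset.sum_nonneg; intro y _
  have h := G.w_nonneg x y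
  nlinarith [sq_nonneg (u y - u x)]

lemma WGraph.integral_nonneg'' (G : WGraph V) {f : V → ℝ} (hf : ∀ x, 0 ≤ f x) :
    0 ≤ G.integral f :=
  Finset.sum_nonneg fun x _ => mul_nonneg (G.mu_pos x).le (hf x)

lemma WGraph.norm1aSq_nonneg' (G : WGraph V) {a : V → ℝ} (ha : ∀ x, 0 ≤ a x) (u : V → ℝ) :
    0 ≤ G.norm1aSq a u :=
  add_nonneg (G.dirichlet_self_nonneg' u)
    (G.integral_nonneg'' fun x => mul_nonneg (ha x) (sq_nonneg _))

/-- perturbed well-depth bound: for every `ε > 0`,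
`r_ε = inf{J(u) : N(u) = -ε} ≥ r - ε/(p+1)`. -/
theorem perturbed_well_depth {V : Type*} [Fintype V] [Nonempty V]
    (G : WGraph V) (hconn : G.Connected) (p : ℝ) (hp : 1 < p)
    (a : V → ℝ) (ha : ∀ x, 0 ≤ a x) (ha0 : a ≠ 0) :
    ∀ ε : ℝ, 0 < ε →
      ((p - 1) / (2 * (p + 1))) * sobolevInf G a p ^ ((p + 1) / (p - 1)) - ε / (p + 1) ≤
        sInf {r : ℝ | ∃ u : V → ℝ, G.nehari a p u = -ε ∧ r = G.J a p u} := by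
  intro ε hε
  have hp1 : (0:ℝ) < p + 1 := by linarith
  have hpm : (0:ℝ) < p - 1 := by linarith
  -- constants for the nonemptiness witness
  set A : ℝ := ∑ x, G.mu x * a x with hA
  set B : ℝ := ∑ x, G.mu x with hB
  have hA0 : 0 ≤ A := Finset.sum_nonneg fun x _ => mul_nonneg (G.mu_pos x).le (ha x)
  have hB0 : 0 < B := Finset.sum_pos (fun x _ => G.mu_pos x) Finset.univ_nonempty
  -- Nehari functional of constant functions
  have hconst : ∀ t : ℝ, 0 ≤ t →
      G.nehari a p (fun _ => t) = t ^ 2 * A - t ^ (p+1) * B := by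
    intro t ht
    have hd : G.dirichlet (fun _ => t) (fun _ => t) = 0 := by
      unfold WGraph.dirichlet; simp
    have h1 : G.integral (fun x => a x * ((fun _ : V => t) x) ^ 2) = t ^ 2 * A := by
      unfold WGraph.integral
      rw [hA, Finset.mul_sum]
      exact Finset.sum_congr rfl fun x _ => by ring
    have h2 : G.integral (fun x => |(fun _ : V => t) x| ^ (p+1)) = t ^ (p+1) * B := by
      unfold WGraph.integral
      rw [hB, Finset.mul_sum]
      exact Finset.sum_congr rfl fun x _ => by
        show G.mu x * |t| ^ (p+1) = t ^ (p+1) * G.mu x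
        rw [abs_of_nonneg ht]; ring
    unfold WGraph.nehari WGraph.norm1aSq
    rw [hd, h1, h2, zero_add]
  -- find T with g T ≤ -ε
  set T : ℝ := max 1 (((A + ε)/B) ^ ((1:ℝ)/(p-1))) with hT
  have hT1 : (1:ℝ) ≤ T := le_max_left _ _
  have hT0 : (0:ℝ) < T := lt_of_lt_of_le one_pos hT1
  have hTp : (A + ε)/B ≤ T ^ (p-1) := by
    have h1 : ((A+ε)/B) ^ ((1:ℝ)/(p-1)) ≤ T := le_max_right _ _
    have h2 : (((A+ε)/B) ^ ((1:ℝ)/(p-1))) ^ (p-1) ≤ T ^ (p-1) :=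
      Real.rpow_le_rpow (Real.rpow_nonneg (by positivity) _) h1 hpm.le
    rwa [← Real.rpow_mul (by positivity), one_div_mul_cancel hpm.ne', Real.rpow_one] at h2
  have hgT : T ^ 2 * A - T ^ (p+1) * B ≤ -ε := by
    have hTpe : T ^ (p+1) = T ^ 2 * T ^ (p-1) := by
      rw [← Real.rpow_two, ← Real.rpow_add hT0]; congr 1; ring
    rw [hTpe]
    have h3 : A + ε ≤ T ^ (p-1) * B := by
      rw [div_le_iff₀ hB0] at hTp; linarith
    have hT2 : (1:ℝ) ≤ T ^ 2 := by nlinarith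
    nlinarith [mul_le_mul_of_nonneg_left h3 (sq_nonneg T),
      mul_le_mul_of_nonneg_left hT2 hε.le]
  -- IVT to get a function with N(u) = -ε
  have hcont : Continuous (fun t : ℝ => t ^ 2 * A - t ^ (p+1) * B) := by
    apply Continuous.sub
    · exact (continuous_pow 2).mul continuous_const
    · exact (continuous_iff_continuousAt.2 fun x =>
        Real.continuousAt_rpow_const x _ (Or.inr hp1.le)).mul continuous_const
  obtain ⟨t, htmem, hgt⟩ :
      ∃ t ∈ Set.Icc (0:ℝ) T, t ^ 2 * A - t ^ (p+1) * B = -ε := by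
    have h0 : (0:ℝ) ^ 2 * A - (0:ℝ) ^ (p+1) * B = 0 := by
      rw [Real.zero_rpow hp1.ne']; ring
    have hmem : -ε ∈ Set.Icc ((fun t : ℝ => t ^ 2 * A - t ^ (p+1) * B) T)
        ((fun t : ℝ => t ^ 2 * A - t ^ (p+1) * B) 0) := by
      constructor
      · exact hgT
      · simp only [h0]; linarith
    obtain ⟨t, ht, h⟩ := intermediate_value_Icc' hT0.le hcont.continuousOn hmem
    exact ⟨t, ht, h⟩
  have hne : {r : ℝ | ∃ u : V → ℝ, G.nehari a p u = -ε ∧ r = G.J a p u}.Nonempty :=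
    ⟨G.J a p (fun _ => t), fun _ => t, by rw [hconst t htmem.1]; exact hgt, rfl⟩
  -- facts about the Sobolev constant
  have hSnonneg : ∀ r ∈ {r : ℝ | ∃ u : V → ℝ, u ≠ 0 ∧
      r = G.norm1aSq a u / (G.integral (fun x => |u x| ^ (p+1))) ^ (2/(p+1))}, (0:ℝ) ≤ r := by
    rintro r ⟨v, hv, rfl⟩
    exact div_nonneg (G.norm1aSq_nonneg' ha v)
      (Real.rpow_nonneg (G.integral_nonneg'' fun x => Real.rpow_nonneg (abs_nonneg _) _) _)
  have hbdd : BddBelow {r : ℝ | ∃ u : V → ℝ, u ≠ 0 ∧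
      r = G.norm1aSq a u / (G.integral (fun x => |u x| ^ (p+1))) ^ (2/(p+1))} :=
    ⟨0, hSnonneg⟩
  have hone : (fun _ : V => (1:ℝ)) ≠ 0 := by
    intro h
    have := congrFun h (Classical.arbitrary V)
    simp at this
  have hΛ0 : 0 ≤ sobolevInf G a p :=
    le_csInf ⟨_, (fun _ => (1:ℝ)), hone, rfl⟩ hSnonneg
  -- the main estimate
  apply le_csInf hne
  rintro r ⟨u, hN, rfl⟩
  set n := G.norm1aSq a u with hn
  set I := G.integral (fun x => |u x| ^ (p+1)) with hI
  have hn0 : 0 ≤ n := G.norm1aSq_nonneg' ha u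
  have hIn : I = n + ε := by
    have : n - I = -ε := hN
    linarith
  have hIpos : 0 < I := by linarith
  have hune : u ≠ 0 := by
    intro h
    have : I = 0 := by
      rw [hI, h]; unfold WGraph.integral; simp [Real.zero_rpow hp1.ne']
    linarith
  have hΛle : sobolevInf G a p ≤ n / I ^ (2/(p+1)) :=
    csInf_le hbdd ⟨u, hune, by rw [hn, hI]⟩
  have key : sobolevInf G a p ^ ((p+1)/(p-1)) ≤ n := by
    rcases eq_or_lt_of_le hn0 with h0 | hnpos
    · have hle0 : sobolevInf G a p ≤ 0 := hΛle.trans (by rw [← h0]; simp)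
      have hΛeq : sobolevInf G a p = 0 := le_antisymm hle0 hΛ0
      rw [hΛeq, Real.zero_rpow (by positivity : (p+1)/(p-1) ≠ 0)]
      exact hn0
    · have hmono : n ^ (2/(p+1)) ≤ I ^ (2/(p+1)) :=
        Real.rpow_le_rpow hn0 (by linarith) (by positivity)
      have hnp : 0 < n ^ (2/(p+1)) := Real.rpow_pos_of_pos hnpos _
      have h4 : sobolevInf G a p ≤ n / n ^ (2/(p+1)) :=
        hΛle.trans (div_le_div_of_nonneg_left hn0 hnp hmono)
      have h5 : n / n ^ (2/(p+1)) = n ^ ((p-1)/(p+1)) := by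
        rw [show (p-1)/(p+1) = 1 - 2/(p+1) by field_simp; ring,
          Real.rpow_sub hnpos, Real.rpow_one]
      have h6 : sobolevInf G a p ^ ((p+1)/(p-1)) ≤ (n ^ ((p-1)/(p+1))) ^ ((p+1)/(p-1)) :=
        Real.rpow_le_rpow hΛ0 (h4.trans_eq h5) (by positivity)
      rwa [← Real.rpow_mul hn0,
        show (p-1)/(p+1) * ((p+1)/(p-1)) = 1 by field_simp, Real.rpow_one] at h6
  have hJ : G.J a p u = ((p-1)/(2*(p+1))) * n - ε/(p+1) := by
    unfold WGraph.J
    rw [← hn, ← hI, hIn]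
    field_simp
    ring
  rw [hJ]
  have hc : (0:ℝ) ≤ (p-1)/(2*(p+1)) := by positivity
  nlinarith [mul_le_mul_of_nonneg_left key hc]
end
end

section
/- Blow-up rate: let u: V × [0,T) → ℝ be a nonnegative solution of ∂_t u = Δu - au + u^p on a finite weighted graph with ‖u(·,t)‖_{L∞(V)} → +∞ as t → T⁻. Then lim_{t→T⁻} (T - t) (max_{x∈V} u(x,t))^{p-1} = 1/(p-1). -/
open Finset Real

noncomputable section

variable {V : Type*} [Fintype V]

/-!
Write `φ(t) = max_x u(x, t)`. At a vertex where the maximum is attained `Δu ≤ 0`, and `u ≥ 0`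
gives `Δu(x) ≥ -(Σ_y ω_{xy} / μ(x)) φ`, so the right Dini derivatives of `φ` lie between
`φ^p - Aφ` and `φ^p`; once `φ` is large the linear term is negligible. By the fencing theorem,
`φ` therefore stays below (above) the solution of `y' = κ y^p` started at `(t, φ(t))` for
`κ > 1` (`κ < 1`). Since `φ` blows up at `T`, the upper comparison solution cannot blow up after
`T`; since `φ` is bounded on compact subintervals of `[0, T)`, the lower one cannot blow up
before `T`. As this solution blows up at `t + 1 / ((p - 1) κ φ(t)^{p-1})`, the quantity
`(T - t) φ(t)^{p-1}` is trapped between the values `1 / ((p - 1) κ)` for `κ` on either side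
of `1`.
-/

open Set Filter Topology

-- The solution of `y' = κ y ^ p` that blows up at time `τ`.
def blowupProfile (p κ τ t : ℝ) : ℝ := ((p - 1) * κ * (τ - t)) ^ (-(p - 1)⁻¹)

section BlowupProfile

variable {p κ τ t : ℝ}

lemma blowupProfile_pos (hp : 1 < p) (hκ : 0 < κ) (ht : t < τ) :
    0 < blowupProfile p κ τ t := by
  unfold blowupProfile
  have : 0 < p - 1 := by linarith
  have : 0 < τ - t := by linarith
  positivity

lemma hasDerivAt_blowupProfile (hp : 1 < p) (hκ : 0 < κ) (ht : t < τ) :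
    HasDerivAt (blowupProfile p κ τ) (κ * blowupProfile p κ τ t ^ p) t := by
  have hp1 : p - 1 ≠ 0 := by linarith
  have hb : 0 < (p - 1) * κ * (τ - t) := by
    have : 0 < p - 1 := by linarith
    have : 0 < τ - t := by linarith
    positivity
  have hbase : HasDerivAt (fun t => (p - 1) * κ * (τ - t)) (-((p - 1) * κ)) t := by
    simpa using ((hasDerivAt_id t).const_sub τ).const_mul ((p - 1) * κ)
  convert hbase.rpow_const (p := -(p - 1)⁻¹) (Or.inl hb.ne') using 1
  · rfl
  rw [blowupProfile, ← rpow_mul hb.le]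
  have hexp : -(p - 1)⁻¹ * p = -(p - 1)⁻¹ - 1 := by field_simp; ring
  rw [hexp]
  field_simp

lemma monotoneOn_blowupProfile (hp : 1 < p) (hκ : 0 < κ) :
    MonotoneOn (blowupProfile p κ τ) (Iio τ) := by
  intro s _ t ht hst
  have : 0 < p - 1 := by linarith
  have : 0 < τ - t := sub_pos.2 ht
  refine rpow_le_rpow_of_nonpos (by positivity) (by gcongr) ?_
  simp only [Left.neg_nonpos_iff, inv_nonneg]; linarith

lemma tendsto_blowupProfile (hp : 1 < p) (hκ : 0 < κ) :
    Tendsto (blowupProfile p κ τ) (𝓝[<] τ) atTop := by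
  have hp1 : 0 < p - 1 := by linarith
  have hbase : Tendsto (fun t => (p - 1) * κ * (τ - t)) (𝓝[<] τ) (𝓝[>] 0) := by
    refine tendsto_nhdsWithin_iff.2 ⟨?_, ?_⟩
    · have hcont : Continuous fun t => (p - 1) * κ * (τ - t) := by fun_prop
      simpa using (hcont.tendsto τ).mono_left nhdsWithin_le_nhds
    · filter_upwards [self_mem_nhdsWithin] with t (ht : t < τ)
      have : 0 < τ - t := sub_pos.2 ht
      exact (by positivity : 0 < (p - 1) * κ * (τ - t))
  exact (tendsto_rpow_neg_nhdsGT_zero (by simpa using hp1)).comp hbase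

lemma blowupProfile_add_inv {y : ℝ} (hp : 1 < p) (hκ : 0 < κ) (hy : 0 < y) :
    blowupProfile p κ (t + ((p - 1) * κ * y ^ (p - 1))⁻¹) t = y := by
  have hp1 : 0 < p - 1 := by linarith
  have : 0 < y ^ (p - 1) := by positivity
  rw [blowupProfile, add_sub_cancel_left, mul_inv, ← mul_assoc, mul_inv_cancel₀ (by positivity),
    one_mul, ← rpow_neg hy.le, ← rpow_mul hy.le]
  field_simp
  simp

lemma continuousOn_blowupProfile (hp : 1 < p) (hκ : 0 < κ) {b : ℝ} (hb : b < τ) :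
    ContinuousOn (blowupProfile p κ τ) (Iic b) := fun _ hx =>
  (hasDerivAt_blowupProfile hp hκ (lt_of_le_of_lt hx hb)).continuousAt.continuousWithinAt

end BlowupProfile

section Comparison

variable {f f' : ℝ → ℝ} {p κ τ s b : ℝ}

lemma le_blowupProfile_of_liminf_slope (hp : 1 < p) (hκ : 0 < κ) (hbτ : b < τ)
    (hf : ContinuousOn f (Icc s b)) (hs : f s ≤ blowupProfile p κ τ s)
    (hf' : ∀ x ∈ Ico s b, ∀ r, f' x < r → ∃ᶠ z in 𝓝[>] x, slope f x z < r)
    (hbound : ∀ x ∈ Ico s b, 0 < f x → f' x < κ * f x ^ p) :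
    ∀ ⦃x⦄, x ∈ Icc s b → f x ≤ blowupProfile p κ τ x := by
  refine image_le_of_liminf_slope_right_lt_deriv_boundary' hf hf' hs
    ((continuousOn_blowupProfile hp hκ hbτ).mono Icc_subset_Iic_self)
    (fun x hx => (hasDerivAt_blowupProfile hp hκ (hx.2.trans hbτ)).hasDerivWithinAt)
    fun x hx hfx => ?_
  rw [← hfx]
  exact hbound x hx (hfx ▸ blowupProfile_pos hp hκ (hx.2.trans hbτ))

lemma blowupProfile_le_of_limsup_slope (hp : 1 < p) (hκ : 0 < κ) (hbτ : b < τ)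
    (hf : ContinuousOn f (Icc s b)) (hs : blowupProfile p κ τ s ≤ f s)
    (hf' : ∀ x ∈ Ico s b, ∀ r < f' x, ∃ᶠ z in 𝓝[>] x, r < slope f x z)
    (hbound : ∀ x ∈ Ico s b, 0 < f x → κ * f x ^ p < f' x) :
    ∀ ⦃x⦄, x ∈ Icc s b → blowupProfile p κ τ x ≤ f x := by
  intro x hx
  refine neg_le_neg_iff.1 <| image_le_of_liminf_slope_right_lt_deriv_boundary'
    (f := (-f ·)) (f' := (-f' ·)) (B := (-blowupProfile p κ τ ·)) hf.neg
    (fun x hx r hr => ?_) (neg_le_neg hs)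
    ((continuousOn_blowupProfile hp hκ hbτ).mono Icc_subset_Iic_self).neg
    (fun x hx => (hasDerivAt_blowupProfile hp hκ (hx.2.trans hbτ)).hasDerivWithinAt.neg)
    (fun x hx hfx => ?_) hx
  · simpa only [slope_neg, neg_lt] using hf' x hx (-r) (neg_lt.1 hr)
  · rw [← neg_inj.1 hfx, neg_lt_neg_iff]
    exact hbound x hx (neg_inj.1 hfx ▸ blowupProfile_pos hp hκ (hx.2.trans hbτ))

end Comparison

section BlowupRate

variable {f f' : ℝ → ℝ} {p κ s T : ℝ}

lemma one_div_le_sub_mul_rpow (hp : 1 < p) (hκ : 0 < κ) (hsT : s < T)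
    (hf : ContinuousOn f (Ico s T)) (hfs : 0 < f s)
    (hf' : ∀ x ∈ Ico s T, ∀ r, f' x < r → ∃ᶠ z in 𝓝[>] x, slope f x z < r)
    (hbound : ∀ x ∈ Ico s T, 0 < f x → f' x < κ * f x ^ p)
    (hblow : Tendsto f (𝓝[<] T) atTop) :
    1 / ((p - 1) * κ) ≤ (T - s) * f s ^ (p - 1) := by
  by_contra! h
  set τ := s + ((p - 1) * κ * f s ^ (p - 1))⁻¹
  have hTτ : T < τ := by
    have : 0 < p - 1 := by linarith
    have : 0 < f s ^ (p - 1) := by positivity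
    have : T - s < ((p - 1) * κ * f s ^ (p - 1))⁻¹ := by
      rwa [mul_inv, ← div_eq_mul_inv, lt_div_iff₀ this, ← one_div]
    linarith
  have hbounded : ∀ t ∈ Ico s T, f t ≤ blowupProfile p κ τ T := fun t ht =>
    calc f t ≤ blowupProfile p κ τ t :=
          le_blowupProfile_of_liminf_slope hp hκ (ht.2.trans hTτ)
            (hf.mono (Icc_subset_Ico_right ht.2)) (blowupProfile_add_inv hp hκ hfs).ge
            (fun x hx => hf' x ⟨hx.1, hx.2.trans ht.2⟩)
            (fun x hx => hbound x ⟨hx.1, hx.2.trans ht.2⟩) ⟨ht.1, le_rfl⟩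
      _ ≤ blowupProfile p κ τ T :=
          monotoneOn_blowupProfile hp hκ (ht.2.trans hTτ) hTτ ht.2.le
  obtain ⟨t, ht, hlarge⟩ := (Eventually.and (Ioo_mem_nhdsLT hsT)
    (hblow.eventually_gt_atTop (blowupProfile p κ τ T))).exists
  exact (hbounded t (Ioo_subset_Ico_self ht)).not_gt hlarge

lemma sub_mul_rpow_le_one_div (hp : 1 < p) (hκ : 0 < κ)
    (hf : ContinuousOn f (Ico s T)) (hfs : 0 < f s)
    (hf' : ∀ x ∈ Ico s T, ∀ r < f' x, ∃ᶠ z in 𝓝[>] x, r < slope f x z)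
    (hbound : ∀ x ∈ Ico s T, 0 < f x → κ * f x ^ p < f' x) :
    (T - s) * f s ^ (p - 1) ≤ 1 / ((p - 1) * κ) := by
  by_contra! h
  set τ := s + ((p - 1) * κ * f s ^ (p - 1))⁻¹
  have hsτ : s < τ := by
    have : 0 < p - 1 := by linarith
    have : 0 < f s ^ (p - 1) := by positivity
    simp only [τ, lt_add_iff_pos_right]; positivity
  have hτT : τ < T := by
    have : 0 < p - 1 := by linarith
    have : 0 < f s ^ (p - 1) := by positivity
    have : ((p - 1) * κ * f s ^ (p - 1))⁻¹ < T - s := by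
      rwa [mul_inv, ← div_eq_mul_inv, div_lt_iff₀ this, ← one_div]
    linarith
  obtain ⟨M, hM⟩ := (isCompact_Icc (a := s) (b := τ)).bddAbove_image
    (hf.mono (Icc_subset_Ico_right hτT))
  have hprofile_le : ∀ t ∈ Ico s τ, blowupProfile p κ τ t ≤ M := fun t ht =>
    calc blowupProfile p κ τ t ≤ f t :=
          blowupProfile_le_of_limsup_slope hp hκ ht.2
            (hf.mono (Icc_subset_Ico_right (ht.2.trans hτT))) (blowupProfile_add_inv hp hκ hfs).le
            (fun x hx => hf' x ⟨hx.1, hx.2.trans (ht.2.trans hτT)⟩)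
            (fun x hx => hbound x ⟨hx.1, hx.2.trans (ht.2.trans hτT)⟩) ⟨ht.1, le_rfl⟩
      _ ≤ M := hM ⟨t, ⟨ht.1, ht.2.le⟩, rfl⟩
  obtain ⟨t, ht, hlarge⟩ := (Eventually.and (Ioo_mem_nhdsLT hsτ)
    ((tendsto_blowupProfile hp hκ).eventually_gt_atTop M)).exists
  exact (hprofile_le t (Ioo_subset_Ico_self ht)).not_gt hlarge

end BlowupRate

theorem tendsto_sub_mul_rpow_of_slope_bounds {f : ℝ → ℝ} {p A t₀ T : ℝ} (hp : 1 < p)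
    (ht₀ : t₀ < T) (hf : ContinuousOn f (Ico t₀ T))
    (hup : ∀ t ∈ Ico t₀ T, ∀ r, f t ^ p < r → ∃ᶠ z in 𝓝[>] t, slope f t z < r)
    (hlow : ∀ t ∈ Ico t₀ T, ∀ r < f t ^ p - A * f t, ∃ᶠ z in 𝓝[>] t, r < slope f t z)
    (hblow : Tendsto f (𝓝[<] T) atTop) :
    Tendsto (fun t => (T - t) * f t ^ (p - 1)) (𝓝[<] T) (𝓝 (1 / (p - 1))) := by
  have hp1 : 0 < p - 1 := by linarith
  have hlate : ∀ P : ℝ → Prop, (∀ᶠ t in 𝓝[<] T, P t) →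
      ∀ᶠ s in 𝓝[<] T, s ∈ Ico t₀ T ∧ ∀ t ∈ Ico s T, P t := by
    intro P hP
    obtain ⟨t₁, ht₁, hsub⟩ := mem_nhdsLT_iff_exists_Ioo_subset.1 hP
    filter_upwards [Ioo_mem_nhdsLT (max_lt ht₀ ht₁)] with s hs
    exact ⟨⟨(le_max_left _ _).trans hs.1.le, hs.2⟩,
      fun t ht => hsub ⟨(le_max_right _ _).trans_lt (hs.1.trans_le ht.1), ht.2⟩⟩
  have hrate : Tendsto (fun κ : ℝ => 1 / ((p - 1) * κ)) (𝓝 1) (𝓝 (1 / (p - 1))) := by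
    have : ContinuousAt (fun κ : ℝ => 1 / ((p - 1) * κ)) 1 := by
      fun_prop (disch := simpa using hp1.ne')
    simpa using this.tendsto
  rw [tendsto_order]
  constructor
  · intro b hb
    obtain ⟨κ, hbκ, hκ⟩ := ((hrate.mono_left nhdsWithin_le_nhds).eventually_const_lt hb
      |>.and self_mem_nhdsWithin).exists (f := 𝓝[>] 1)
    filter_upwards [hlate _ (hblow.eventually_gt_atTop 0)] with s ⟨hs, hpos⟩
    refine hbκ.trans_le <| one_div_le_sub_mul_rpow hp (by linarith) hs.2
      (hf.mono (Ico_subset_Ico_left hs.1)) (hpos s ⟨le_rfl, hs.2⟩)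
      (fun x hx => hup x ⟨hs.1.trans hx.1, hx.2⟩) (fun x _ hx => ?_) hblow
    exact lt_mul_left (by positivity) hκ
  · intro b hb
    obtain ⟨κ, hbκ, hκ, hκ1⟩ := ((hrate.mono_left nhdsWithin_le_nhds).eventually_lt_const hb
      |>.and (Ioo_mem_nhdsLT zero_lt_one)).exists (f := 𝓝[<] 1)
    have hdom : ∀ᶠ t in 𝓝[<] T, 0 < f t ∧ A < (1 - κ) * f t ^ (p - 1) :=
      (hblow.eventually_gt_atTop 0).and
        (((tendsto_rpow_atTop hp1).comp hblow).const_mul_atTop (by linarith)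
          |>.eventually_gt_atTop A)
    filter_upwards [hlate _ hdom] with s ⟨hs, hdom⟩
    refine lt_of_le_of_lt (sub_mul_rpow_le_one_div hp hκ
      (hf.mono (Ico_subset_Ico_left hs.1)) (hdom s ⟨le_rfl, hs.2⟩).1
      (fun x hx => hlow x ⟨hs.1.trans hx.1, hx.2⟩) (fun x hx hx0 => ?_)) hbκ
    have hsplit : f x ^ p = f x ^ (p - 1) * f x := by
      rw [rpow_sub_one hx0.ne', div_mul_cancel₀ _ hx0.ne']
    nlinarith [(hdom x hx).2]

lemma ContinuousOn.ciSup_of_finite {α ι : Type*} [TopologicalSpace α] [Finite ι] [Nonempty ι]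
    {f : ι → α → ℝ} {s : Set α} (hf : ∀ i, ContinuousOn (f i) s) :
    ContinuousOn (fun t => ⨆ i, f i t) s := by
  have := Fintype.ofFinite ι
  simpa only [Finset.sup'_univ_eq_ciSup] using
    ContinuousOn.finset_sup'_apply Finset.univ_nonempty fun i _ => hf i

section SupSlope

variable {ι : Type*} [Finite ι] [Nonempty ι] {f : ι → ℝ → ℝ} {t r : ℝ}

lemma eventually_slope_iSup_lt {f' : ι → ℝ}
    (hf : ∀ i, HasDerivWithinAt (f i) (f' i) (Ici t) t)
    (hr : ∀ i, f i t = ⨆ j, f j t → f' i < r) :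
    ∀ᶠ z in 𝓝[>] t, slope (fun τ => ⨆ i, f i τ) t z < r := by
  have hgraph : ∀ i, ∀ᶠ z in 𝓝[>] t, f i z - r * (z - t) < ⨆ j, f j t := by
    intro i
    rcases (le_ciSup (Finite.bddAbove_range (f · t)) i).eq_or_lt with hmax | hlt
    · filter_upwards [(hf i).Ioi_of_Ici.limsup_slope_le' (lt_irrefl t) (hr i hmax),
        self_mem_nhdsWithin] with z hz (hzt : t < z)
      rw [slope_def_field, div_lt_iff₀ (sub_pos.2 hzt)] at hz
      linarith
    · have hcont : ContinuousWithinAt (fun z => f i z - r * (z - t)) (Ioi t) t :=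
        ((hf i).continuousWithinAt.mono Ioi_subset_Ici_self).sub (by fun_prop)
      exact hcont.eventually_lt continuousWithinAt_const (by simpa using hlt)
  filter_upwards [eventually_all.2 hgraph, self_mem_nhdsWithin] with z hz (hzt : t < z)
  obtain ⟨i, hi⟩ := exists_eq_ciSup_of_finite (f := (f · z))
  rw [slope_def_field, div_lt_iff₀ (sub_pos.2 hzt), ← hi]
  linarith [hz i]

end SupSlope

lemma eventually_lt_slope_of_le {f g : ℝ → ℝ} {d t r : ℝ}
    (hf : HasDerivWithinAt f d (Ici t) t) (hfg : ∀ z, f z ≤ g z) (ht : f t = g t) (hr : r < d) :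
    ∀ᶠ z in 𝓝[>] t, r < slope g t z := by
  filter_upwards [((hasDerivWithinAt_iff_tendsto_slope' (lt_irrefl t)).1
    hf.Ioi_of_Ici).eventually_const_lt hr, self_mem_nhdsWithin] with z hz (hzt : t < z)
  rw [slope_def_field] at hz ⊢
  calc r < (f z - f t) / (z - t) := hz
    _ ≤ (g z - g t) / (z - t) := by
      rw [ht]
      gcongr
      exact hfg z

section Laplacian

variable (G : WGraph V) {u : V → ℝ} {x : V}

lemma WGraph.lap_nonpos_of_forall_le (hx : ∀ y, u y ≤ u x) : G.lap u x ≤ 0 :=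
  div_nonpos_of_nonpos_of_nonneg
    (Finset.sum_nonpos fun y _ => mul_nonpos_of_nonneg_of_nonpos (G.w_nonneg x y)
      (sub_nonpos.2 (hx y)))
    (G.mu_pos x).le

lemma WGraph.neg_mul_le_lap (hu : ∀ y, 0 ≤ u y) :
    -((∑ y, G.w x y) / G.mu x * u x) ≤ G.lap u x := by
  rw [WGraph.lap, neg_mul_eq_neg_mul, ← neg_div, div_mul_eq_mul_div]
  refine div_le_div_of_nonneg_right ?_ (G.mu_pos x).le
  rw [← Finset.sum_neg_distrib, Finset.sum_mul]
  exact Finset.sum_le_sum fun y _ => by nlinarith [G.w_nonneg x y, hu y]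

end Laplacian

/-- blow-up rate: if a nonnegative solution of
`∂_t u = Δu - au + u^p` blows up in `L∞` as `t → T⁻`, then
`(T-t)(max_x u(x,t))^{p-1} → 1/(p-1)`. -/
theorem blowup_rate {V : Type*} [Fintype V] [Nonempty V]
    (G : WGraph V) (T p : ℝ) (hT : 0 < T) (hp : 1 < p)
    (a : V → ℝ) (ha : ∀ x, 0 ≤ a x)
    (u u' : V → ℝ → ℝ)
    (hnonneg : ∀ x, ∀ t ∈ Set.Ico (0:ℝ) T, 0 ≤ u x t)
    (hderiv : ∀ x, ∀ t ∈ Set.Ico (0:ℝ) T,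
      HasDerivWithinAt (u x) (u' x t) (Set.Ico 0 T) t)
    (heq : ∀ x, ∀ t ∈ Set.Ico (0:ℝ) T,
      u' x t = G.lap (fun y => u y t) x - a x * u x t + u x t ^ p)
    (hblow : Filter.Tendsto (fun t => ⨆ x, u x t)
      (nhdsWithin T (Set.Iio T)) Filter.atTop) :
    Filter.Tendsto (fun t => (T - t) * (⨆ x, u x t) ^ (p - 1))
      (nhdsWithin T (Set.Iio T)) (nhds (1 / (p - 1))) := by
  obtain ⟨A, hA⟩ := (Set.finite_range fun x => (∑ y, G.w x y) / G.mu x + a x).bddAbove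
  have hright : ∀ x, ∀ t ∈ Ico (0 : ℝ) T, HasDerivWithinAt (u x) (u' x t) (Ici t) t :=
    fun x t ht => (hderiv x t ht).mono_of_mem_nhdsWithin
      (mem_of_superset (Ico_mem_nhdsGE ht.2) (Ico_subset_Ico_left ht.1))
  refine tendsto_sub_mul_rpow_of_slope_bounds (A := A) hp hT
    (ContinuousOn.ciSup_of_finite fun x t ht => (hderiv x t ht).continuousWithinAt) ?_ ?_ hblow
  · intro t ht r hr
    refine (eventually_slope_iSup_lt (fun x => hright x t ht) fun x hx => ?_).frequently
    have hmax : ∀ y, u y t ≤ u x t :=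
      fun y => hx ▸ le_ciSup (Finite.bddAbove_range (u · t)) y
    rw [← hx] at hr
    rw [heq x t ht]
    linarith [G.lap_nonpos_of_forall_le hmax, mul_nonneg (ha x) (hnonneg x t ht)]
  · intro t ht r hr
    obtain ⟨x, hx⟩ := exists_eq_ciSup_of_finite (f := (u · t))
    refine (eventually_lt_slope_of_le (hright x t ht)
      (fun z => le_ciSup (Finite.bddAbove_range (u · z)) x) hx ?_).frequently
    rw [heq x t ht]
    rw [← hx] at hr
    have hlap := G.neg_mul_le_lap (fun y => hnonneg y t ht) (x := x)
    have hAx := hA ⟨x, rfl⟩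
    nlinarith [hnonneg x t ht]
end
end
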